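/- For a bounded real random variable X on a finite probability space with values in [m, M] and α ∈ (0,1), the infimum in CVaR_α(X) = inf_{z ∈ ℝ} E[z + (X − z)⁺/(1−α)] is attained at some z ∈ [m, M]. -/

import Mathlib

/-!
The CVaR objective `z ↦ E[z + (X - z)⁺ / (1 - α)]` is continuous. Below `m` every `(X - z)⁺`
equals `X - z`, so the objective has slope `1 - 1/(1 - α) < 0` there; above `M` every `(X - z)⁺`
vanishes and the objective increases. Hence its minimum over the compact interval `[m, M]` is a
global minimum.
-/

open Set

theorem Continuous.exists_mem_Icc_isMinOn_univ {f : ℝ → ℝ} (hf : Continuous f) {a b : ℝ}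
    (hab : a ≤ b) (h_anti : AntitoneOn f (Iic a)) (h_mono : MonotoneOn f (Ici b)) :
    ∃ z₀ ∈ Icc a b, IsMinOn f univ z₀ := by
  obtain ⟨z₀, hz₀, hmin⟩ :=
    isCompact_Icc.exists_isMinOn (nonempty_Icc.mpr hab) hf.continuousOn
  refine ⟨z₀, hz₀, fun z _ => ?_⟩
  rcases le_total z a with hza | haz
  · exact (hmin (left_mem_Icc.mpr hab)).trans
      (h_anti (mem_Iic.mpr hza) self_mem_Iic hza)
  rcases le_total z b with hzb | hbz
  · exact hmin ⟨haz, hzb⟩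
  · exact (hmin (right_mem_Icc.mpr hab)).trans
      (h_mono self_mem_Ici (mem_Ici.mpr hbz) hbz)

section CVaR

variable {Ω : Type*} [Fintype Ω]

/-- The function whose infimum over `z` is `CVaR_α(X)` under the weights `p`. -/
noncomputable def cvarObjective (p X : Ω → ℝ) (α z : ℝ) : ℝ :=
  ∑ ω, p ω * (z + max (X ω - z) 0 / (1 - α))

theorem antitoneOn_add_posPart_sub_div {x α : ℝ} (hα₀ : 0 ≤ α) (hα₁ : α < 1) :
    AntitoneOn (fun z => z + max (x - z) 0 / (1 - α)) (Iic x) := by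
  intro z hz w hw hzw
  have h1α : 0 < 1 - α := by linarith
  simp only [max_eq_left (sub_nonneg.mpr (mem_Iic.mp hz)),
    max_eq_left (sub_nonneg.mpr (mem_Iic.mp hw))]
  rw [← sub_nonneg]
  have key : z + (x - z) / (1 - α) - (w + (x - w) / (1 - α)) = (w - z) * α / (1 - α) := by
    field_simp
    ring
  rw [key]
  exact div_nonneg (mul_nonneg (sub_nonneg.mpr hzw) hα₀) h1α.le

theorem monotoneOn_add_posPart_sub_div {x α : ℝ} :
    MonotoneOn (fun z => z + max (x - z) 0 / (1 - α)) (Ici x) := by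
  intro z hz w hw hzw
  simp only [max_eq_right (sub_nonpos.mpr (mem_Ici.mp hz)),
    max_eq_right (sub_nonpos.mpr (mem_Ici.mp hw)), zero_div, add_zero]
  exact hzw

variable {p X : Ω → ℝ} {α : ℝ}

theorem continuous_cvarObjective : Continuous (cvarObjective p X α) :=
  continuous_finsetSum _ fun _ _ => continuous_const.mul (continuous_id.add
    (((continuous_const.sub continuous_id).max continuous_const).div_const _))

theorem antitoneOn_cvarObjective (hp : ∀ ω, 0 ≤ p ω) {m : ℝ} (hm : ∀ ω, m ≤ X ω)
    (hα₀ : 0 ≤ α) (hα₁ : α < 1) : AntitoneOn (cvarObjective p X α) (Iic m) :=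
  fun _ hz _ hw hzw => Finset.sum_le_sum fun ω _ => mul_le_mul_of_nonneg_left
    (antitoneOn_add_posPart_sub_div hα₀ hα₁ (Iic_subset_Iic.mpr (hm ω) hz)
      (Iic_subset_Iic.mpr (hm ω) hw) hzw) (hp ω)

theorem monotoneOn_cvarObjective (hp : ∀ ω, 0 ≤ p ω) {M : ℝ} (hM : ∀ ω, X ω ≤ M) :
    MonotoneOn (cvarObjective p X α) (Ici M) :=
  fun _ hz _ hw hzw => Finset.sum_le_sum fun ω _ => mul_le_mul_of_nonneg_left
    (monotoneOn_add_posPart_sub_div (Ici_subset_Ici.mpr (hM ω) hz)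
      (Ici_subset_Ici.mpr (hM ω) hw) hzw) (hp ω)

end CVaR

/-- For `m ≤ X ≤ M` on a finite probability space, the infimum defining CVaR
is attained at some `z ∈ [m, M]`. -/
theorem stmt_10 (Ω : Type*) [Fintype Ω] (p : Ω → ℝ)
    (hp : ∀ ω, 0 ≤ p ω) (hsum : ∑ ω, p ω = 1)
    (X : Ω → ℝ) (m M : ℝ) (hm : ∀ ω, m ≤ X ω) (hM : ∀ ω, X ω ≤ M)
    (α : ℝ) (hα : α ∈ Set.Ioo (0 : ℝ) 1) :
    ∃ z₀ ∈ Set.Icc m M,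
      (∑ ω, p ω * (z₀ + max (X ω - z₀) 0 / (1 - α))) =
        ⨅ z : ℝ, ∑ ω, p ω * (z + max (X ω - z) 0 / (1 - α)) := by
  obtain ⟨ω, -, -⟩ := Finset.exists_ne_zero_of_sum_ne_zero (hsum.trans_ne one_ne_zero)
  obtain ⟨z₀, hz₀, hmin⟩ := continuous_cvarObjective.exists_mem_Icc_isMinOn_univ
    ((hm ω).trans (hM ω)) (antitoneOn_cvarObjective hp hm hα.1.le hα.2)
    (monotoneOn_cvarObjective hp hM)
  exact ⟨z₀, hz₀, (ciInf_eq_of_forall_ge_of_forall_gt_exists_lt (f := cvarObjective p X α)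
    (fun z => hmin (mem_univ z)) fun _ hw => ⟨z₀, hw⟩).symm⟩
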